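/- arXiv:0805.3845 — 5 statements merged into one kernel-verified Lean document; each statement's English description precedes it below -/
import Mathlib

section
/- Let H be a symmetric positive definite n×n real matrix with trace 1, where n ≥ 3. Then there exists a constant A > 0 depending only on n such that det(H)^{1/2} / det(I - H) ≤ (n / (n-1)^2)^{n/2} · (1 - A · Σᵢ (λᵢ - 1/n)²), where λ₁, ..., λₙ are the eigenvalues of H. -/
/-!
With `λᵢ` the eigenvalues, the left side is `√(∏ λᵢ / (1 - λᵢ)²) = exp (½ ∑ logWeight λᵢ)`, where
`logWeight x = log x - 2 log (1 - x)`, and the constant is `exp (½ n logWeight (1/n))`.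
On `(0, 1/2]`, `logWeight` lies below its tangent line at any `q ≤ 1/3` with a quadratic defect
`(x - q)² / 162`; summing at `q = 1/n` settles the case where all `λᵢ ≤ 1/2`. Otherwise exactly
one `λⱼ = 1 - σ` exceeds `1/2`; the tangent line at the mean `σ / (n - 1)` of the others bounds
their contribution, and the resulting one-variable inequality in `σ` holds with a factor
`499/500`, which absorbs the deviation term because `∑ (λᵢ - 1/n)² ≤ 1`.
-/

open Real Set Finset

theorem isMinOn_of_hasDerivAt_of_sign {f f' : ℝ → ℝ} {D : Set ℝ} (hD : D.OrdConnected)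
    {q : ℝ} (hq : q ∈ D) (hf : ∀ x ∈ D, HasDerivAt f (f' x) x)
    (hsign : ∀ x ∈ D, 0 ≤ (x - q) * f' x) : IsMinOn f D q := by
  intro t ht
  have hderiv : ∀ {a b}, a ∈ D → b ∈ D → ∀ x ∈ interior (Icc a b),
      HasDerivWithinAt f (f' x) (interior (Icc a b)) x := fun ha hb x hx =>
    (hf x (hD.out ha hb (interior_subset hx))).hasDerivWithinAt
  have hcont : ∀ {a b}, a ∈ D → b ∈ D → ContinuousOn f (Icc a b) := fun ha hb x hx =>
    (hf x (hD.out ha hb hx)).continuousAt.continuousWithinAt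
  rcases le_total q t with hqt | htq
  · refine monotoneOn_of_hasDerivWithinAt_nonneg (convex_Icc q t) (hcont hq ht) (hderiv hq ht)
      (fun x hx => ?_) (left_mem_Icc.2 hqt) (right_mem_Icc.2 hqt) hqt
    rw [interior_Icc] at hx
    exact nonneg_of_mul_nonneg_right (hsign x (hD.out hq ht (Ioo_subset_Icc_self hx)))
      (sub_pos.2 hx.1)
  · refine antitoneOn_of_hasDerivWithinAt_nonpos (convex_Icc t q) (hcont ht hq) (hderiv ht hq)
      (fun x hx => ?_) (left_mem_Icc.2 htq) (right_mem_Icc.2 htq) htq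
    rw [interior_Icc] at hx
    exact nonpos_of_mul_nonneg_right (hsign x (hD.out ht hq (Ioo_subset_Icc_self hx)))
      (sub_neg.2 hx.2)

noncomputable def logWeight (x : ℝ) : ℝ := log x - 2 * log (1 - x)

noncomputable def logWeightDeriv (x : ℝ) : ℝ := x⁻¹ + 2 / (1 - x)

theorem hasDerivAt_logWeight {x : ℝ} (hx0 : 0 < x) (hx1 : x < 1) :
    HasDerivAt logWeight (logWeightDeriv x) x := by
  have h := (hasDerivAt_log hx0.ne').sub
    ((((hasDerivAt_id' x).const_sub 1).log (sub_ne_zero.2 hx1.ne')).const_mul 2)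
  refine h.congr_deriv ?_
  simp only [logWeightDeriv]
  ring

theorem exp_logWeight {x : ℝ} (hx0 : 0 < x) (hx1 : x < 1) :
    exp (logWeight x) = x / (1 - x) ^ 2 := by
  have h1x : 0 < 1 - x := by linarith
  rw [logWeight, exp_sub, exp_log hx0, ← Nat.cast_ofNat, ← log_pow, exp_log (by positivity)]

theorem logWeightDeriv_sub {q x : ℝ} (hq0 : q ≠ 0) (hq1 : q ≠ 1) (hx0 : x ≠ 0) (hx1 : x ≠ 1) :
    logWeightDeriv q - logWeightDeriv x = (x - q) * (1 / (x * q) - 2 / ((1 - x) * (1 - q))) := by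
  have : 1 - x ≠ 0 := sub_ne_zero.2 (Ne.symm hx1)
  have : 1 - q ≠ 0 := sub_ne_zero.2 (Ne.symm hq1)
  simp only [logWeightDeriv]
  field_simp
  ring

theorem hasDerivAt_logWeight_tangent_gap {q x : ℝ} (hx0 : 0 < x) (hx1 : x < 1) :
    HasDerivAt (fun y => logWeight q + logWeightDeriv q * (y - q) - logWeight y)
      (logWeightDeriv q - logWeightDeriv x) x := by
  have h := (((hasDerivAt_id' x).sub_const q).const_mul (logWeightDeriv q)).const_add
    (logWeight q) |>.sub (hasDerivAt_logWeight hx0 hx1)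
  rwa [mul_one] at h

theorem logWeight_le_tangent_sub_sq {q t : ℝ} (hq0 : 0 < q) (hq : q ≤ 2 / 5) (ht0 : 0 < t)
    (ht : t ≤ 2 / 5) :
    logWeight t ≤ logWeight q + logWeightDeriv q * (t - q) - 25 / 72 * (t - q) ^ 2 := by
  have hmin : IsMinOn (fun y => logWeight q + logWeightDeriv q * (y - q) - logWeight y
      - 25 / 72 * (y - q) ^ 2) (Ioc 0 (2 / 5)) q := by
    refine isMinOn_of_hasDerivAt_of_sign ordConnected_Ioc ⟨hq0, hq⟩
      (fun x hx => (hasDerivAt_logWeight_tangent_gap hx.1 (by linarith [hx.2])).sub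
        (((hasDerivAt_id' x).sub_const q).pow 2 |>.const_mul _)) (fun x hx => ?_)
    obtain ⟨hx0, hx⟩ := hx
    have hxq : 25 / 4 ≤ 1 / (x * q) := by
      rw [le_div_iff₀ (by positivity)]; nlinarith
    have hxq' : 2 / ((1 - x) * (1 - q)) ≤ 50 / 9 := by
      rw [div_le_iff₀ (by nlinarith)]; nlinarith
    rw [logWeightDeriv_sub hq0.ne' (by linarith) hx0.ne' (by linarith)]
    have : 0 ≤ (x - q) ^ 2 * (1 / (x * q) - 2 / ((1 - x) * (1 - q)) - 25 / 36) :=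
      mul_nonneg (sq_nonneg _) (by linarith)
    simp only [Nat.cast_ofNat]
    linear_combination this
  have := isMinOn_iff.1 hmin t ⟨ht0, ht⟩
  norm_num at this
  linarith

theorem logWeight_le_tangent_sub_sq_of_le_half {q t : ℝ} (hq0 : 0 < q) (hq : q ≤ 1 / 3)
    (ht0 : 0 < t) (ht : t ≤ 1 / 2) :
    logWeight t ≤ logWeight q + logWeightDeriv q * (t - q) - 1 / 162 * (t - q) ^ 2 := by
  rcases le_or_gt t (2 / 5) with ht' | ht'
  · nlinarith [logWeight_le_tangent_sub_sq hq0 (by linarith) ht0 ht', sq_nonneg (t - q)]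
  -- On `[2/5, 1/2]` the tangent gap is increasing, and at `2/5` it is already `≥ 1/648`.
  have hmin : IsMinOn (fun y => logWeight q + logWeightDeriv q * (y - q) - logWeight y)
      (Icc (2 / 5) (1 / 2)) (2 / 5) := by
    refine isMinOn_of_hasDerivAt_of_sign ordConnected_Icc (by norm_num)
      (fun x hx => hasDerivAt_logWeight_tangent_gap (by linarith [hx.1]) (by linarith [hx.2]))
      (fun x hx => ?_)
    obtain ⟨hx0, hx⟩ := hx
    have hxq : 6 ≤ 1 / (x * q) := by
      rw [le_div_iff₀ (by positivity)]; nlinarith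
    have hxq' : 2 / ((1 - x) * (1 - q)) ≤ 6 := by
      rw [div_le_iff₀ (by nlinarith)]; nlinarith
    rw [logWeightDeriv_sub hq0.ne' (by linarith) (by linarith) (by linarith)]
    exact mul_nonneg (by linarith) (mul_nonneg (by linarith) (by linarith))
  have h25 := logWeight_le_tangent_sub_sq hq0 (by linarith) (by norm_num : (0 : ℝ) < 2 / 5) le_rfl
  have hgap := isMinOn_iff.1 hmin t ⟨ht'.le, ht⟩
  nlinarith

theorem sum_logWeight_add_le {ι : Type*} (s : Finset ι) {l : ι → ℝ} (hpos : ∀ i ∈ s, 0 < l i)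
    (hhalf : ∀ i ∈ s, l i ≤ 1 / 2) {q : ℝ} (hq0 : 0 < q) (hq : q ≤ 1 / 3)
    (hmean : ∑ i ∈ s, l i = #s * q) :
    ∑ i ∈ s, logWeight (l i) + 1 / 162 * ∑ i ∈ s, (l i - q) ^ 2 ≤ #s * logWeight q := by
  have htangent : ∑ i ∈ s, logWeight (l i) + 1 / 162 * ∑ i ∈ s, (l i - q) ^ 2
      ≤ ∑ i ∈ s, (logWeight q + logWeightDeriv q * (l i - q)) := by
    rw [mul_sum, ← sum_add_distrib]
    refine sum_le_sum fun i hi => ?_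
    linarith [logWeight_le_tangent_sub_sq_of_le_half hq0 hq (hpos i hi) (hhalf i hi)]
  simp only [sum_add_distrib, ← mul_sum, sum_sub_distrib, hmean, sum_const, nsmul_eq_mul,
    sub_self, mul_zero, add_zero] at htangent
  exact htangent

theorem prod_div_sq_eq_exp_sum_logWeight {ι : Type*} (s : Finset ι) {l : ι → ℝ}
    (hpos : ∀ i ∈ s, 0 < l i) (hlt : ∀ i ∈ s, l i < 1) :
    ∏ i ∈ s, l i / (1 - l i) ^ 2 = exp (∑ i ∈ s, logWeight (l i)) := by
  rw [exp_sum]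
  exact prod_congr rfl fun i hi => (exp_logWeight (hpos i hi) (hlt i hi)).symm

theorem prod_div_sq_le_of_forall_le_half {ι : Type*} [Fintype ι] (hn : 3 ≤ Fintype.card ι)
    {l : ι → ℝ} (hpos : ∀ i, 0 < l i) (hhalf : ∀ i, l i ≤ 1 / 2) (hsum : ∑ i, l i = 1) :
    ∏ i, l i / (1 - l i) ^ 2
      ≤ ((Fintype.card ι : ℝ) / ((Fintype.card ι : ℝ) - 1) ^ 2) ^ Fintype.card ι
        * exp (-(1 / 162 * ∑ i, (l i - 1 / (Fintype.card ι : ℝ)) ^ 2)) := by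
  have hn3 : (3 : ℝ) ≤ Fintype.card ι := by exact_mod_cast hn
  have hq0 : 0 < 1 / (Fintype.card ι : ℝ) := by positivity
  have hq : 1 / (Fintype.card ι : ℝ) ≤ 1 / 3 := one_div_le_one_div_of_le (by norm_num) hn3
  have hlog := sum_logWeight_add_le univ (fun i _ => hpos i) (fun i _ => hhalf i) hq0 hq
    (by rw [hsum, card_univ]; field_simp)
  have hX : exp (logWeight (1 / (Fintype.card ι : ℝ)))
      = (Fintype.card ι : ℝ) / ((Fintype.card ι : ℝ) - 1) ^ 2 := by
    rw [exp_logWeight hq0 (by linarith)]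
    field_simp
  rw [card_univ] at hlog
  rw [prod_div_sq_eq_exp_sum_logWeight univ (fun i _ => hpos i)
    (fun i _ => by linarith [hhalf i]), ← hX, ← exp_nat_mul, ← exp_add]
  exact exp_le_exp.2 (by linarith)

theorem five_mul_sq_le_two_pow_mul {m : ℕ} (hm : 4 ≤ m) : 5 * m ^ 2 ≤ 2 ^ m * (m + 1) := by
  induction m, hm using Nat.le_induction with
  | base => norm_num
  | succ m hm ih =>
    rw [pow_succ 2 m]
    nlinarith

theorem eight_mul_pow_le {m : ℕ} (hm : 3 ≤ m) :
    8 * (m : ℝ) ^ (m + 2) ≤ 499 / 500 * 2 ^ m * ((m : ℝ) + 1) ^ (m + 1) := by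
  rcases hm.eq_or_lt with rfl | hm4
  · norm_num
  have hm0 : (0 : ℝ) < m := by positivity
  have hbern : 2 * (m : ℝ) ^ m ≤ ((m : ℝ) + 1) ^ m := by
    have h := one_add_mul_le_pow (a := 1 / (m : ℝ)) (by linarith [one_div_pos.2 hm0]) m
    rw [mul_one_div_cancel hm0.ne'] at h
    calc 2 * (m : ℝ) ^ m ≤ (1 + 1 / m) ^ m * m ^ m := by gcongr; linarith
      _ = ((m : ℝ) + 1) ^ m := by rw [← mul_pow]; field_simp
  have hnum : 5 * (m : ℝ) ^ 2 ≤ 2 ^ m * (m + 1) := by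
    exact_mod_cast five_mul_sq_le_two_pow_mul hm4
  calc 8 * (m : ℝ) ^ (m + 2) = 4 * m ^ 2 * (2 * m ^ m) := by ring
    _ ≤ 4 * m ^ 2 * ((m : ℝ) + 1) ^ m := by gcongr
    _ ≤ 499 / 500 * (2 ^ m * (m + 1)) * ((m : ℝ) + 1) ^ m :=
      mul_le_mul_of_nonneg_right (by linarith [sq_nonneg (m : ℝ)]) (by positivity)
    _ = 499 / 500 * 2 ^ m * ((m : ℝ) + 1) ^ (m + 1) := by ring

theorem one_sub_div_sq_mul_pow_le {m : ℕ} (hm : 2 ≤ m) {σ : ℝ} (hσ0 : 0 < σ) (hσ : σ ≤ 1 / 2) :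
    (1 - σ) / σ ^ 2 * (σ / m / (1 - σ / m) ^ 2) ^ m
      ≤ 499 / 500 * (((m : ℝ) + 1) / (m : ℝ) ^ 2) ^ (m + 1) := by
  -- For `m = 2` the Bernoulli step below loses too much; that case is a polynomial inequality.
  rcases hm.eq_or_lt with rfl | hm3
  · have hpoly : 1 - σ ≤ 4 * (499 / 500 * 27 / 64) * (1 - σ / 2) ^ 4 := by
      nlinarith [sq_nonneg σ, sq_nonneg (σ - 1 / 2), mul_pos hσ0 hσ0, pow_pos hσ0 3,
        pow_pos hσ0 4, mul_nonneg hσ0.le (sub_nonneg.2 hσ)]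
    have h1 : 0 < 1 - σ / 2 := by linarith
    rw [div_pow, div_pow, ← pow_mul, div_mul_div_comm, div_le_iff₀ (by positivity)]
    norm_num
    nlinarith [mul_le_mul_of_nonneg_left hpoly (sq_nonneg σ)]
  obtain ⟨k, rfl⟩ : ∃ k, m = k + 2 := ⟨m - 2, by omega⟩
  have hm0 : (0 : ℝ) < ↑(k + 2) := by positivity
  have hσ1 : 0 < 1 - σ := by linarith
  have hbern : 1 - σ ≤ (1 - σ / ↑(k + 2)) ^ (k + 2) := by
    have h := one_add_mul_le_pow (a := -(σ / ↑(k + 2)))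
      (by linarith [div_le_self hσ0.le (by norm_cast; omega : (1 : ℝ) ≤ ↑(k + 2))]) (k + 2)
    rwa [mul_neg, mul_div_cancel₀ _ hm0.ne', ← sub_eq_add_neg, ← sub_eq_add_neg] at h
  set m : ℝ := ↑(k + 2)
  calc (1 - σ) / σ ^ 2 * (σ / m / (1 - σ / m) ^ 2) ^ (k + 2)
      = (1 - σ) * σ ^ k / (m ^ (k + 2) * ((1 - σ / m) ^ (k + 2)) ^ 2) := by
        rw [div_pow, div_pow, ← pow_mul, ← pow_mul, mul_comm 2]
        field_simp
        ring
    _ ≤ (1 - σ) * σ ^ k / (m ^ (k + 2) * (1 - σ) ^ 2) := by gcongr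
    _ = σ ^ k / (m ^ (k + 2) * (1 - σ)) := by field_simp
    _ ≤ (1 / 2) ^ k / (m ^ (k + 2) * (1 / 2)) := by gcongr; linarith
    _ = 8 * m ^ (k + 2 + 2) / (2 ^ (k + 2) * (m ^ 2) ^ (k + 2 + 1)) := by
        rw [one_div_pow]; field_simp; ring
    _ ≤ 499 / 500 * 2 ^ (k + 2) * (m + 1) ^ (k + 2 + 1)
          / (2 ^ (k + 2) * (m ^ 2) ^ (k + 2 + 1)) := by
        exact div_le_div_of_nonneg_right (eight_mul_pow_le (by omega)) (by positivity)
    _ = 499 / 500 * ((m + 1) / m ^ 2) ^ (k + 2 + 1) := by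
        rw [div_pow]; field_simp

theorem prod_div_sq_le_of_half_lt {ι : Type*} [Fintype ι] [DecidableEq ι]
    (hn : 3 ≤ Fintype.card ι) {l : ι → ℝ} (hpos : ∀ i, 0 < l i) (hsum : ∑ i, l i = 1) {j : ι}
    (hj : 1 / 2 < l j) :
    ∏ i, l i / (1 - l i) ^ 2
      ≤ 499 / 500 * ((Fintype.card ι : ℝ) / ((Fintype.card ι : ℝ) - 1) ^ 2) ^ Fintype.card ι := by
  obtain ⟨m, hm⟩ : ∃ m, Fintype.card ι = m + 1 := ⟨Fintype.card ι - 1, by omega⟩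
  set s := univ.erase j
  set σ := 1 - l j with hσ_def
  have hs_sum : ∑ i ∈ s, l i = σ := by
    rw [hσ_def, ← hsum, ← add_sum_erase univ l (mem_univ j)]; ring
  have hs_card : #s = m := by simp [s, card_erase_of_mem, hm]
  have hs_le : ∀ i ∈ s, l i ≤ σ := fun i hi =>
    hs_sum ▸ single_le_sum (fun k _ => (hpos k).le) hi
  have hσ0 : 0 < σ := hs_sum ▸ sum_pos (fun i _ => hpos i) (card_pos.1 (by omega))
  have hσ : σ < 1 / 2 := by linarith
  have hm2 : (2 : ℝ) ≤ m := by exact_mod_cast (by omega : 2 ≤ m)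
  have hq0 : 0 < σ / m := by positivity
  have hq : σ / m ≤ 1 / 3 := by
    rw [div_le_iff₀ (by linarith)]; linarith
  -- The other `l i` are at most `σ < 1/2`, so the tangent line at their mean `σ / m` applies.
  have hlog := sum_logWeight_add_le s (fun i _ => hpos i) (fun i hi => by linarith [hs_le i hi])
    hq0 hq (by rw [hs_sum, hs_card]; field_simp)
  have hrest : ∏ i ∈ s, l i / (1 - l i) ^ 2 ≤ (σ / m / (1 - σ / m) ^ 2) ^ m := by
    rw [prod_div_sq_eq_exp_sum_logWeight s (fun i _ => hpos i)
      (fun i hi => by linarith [hs_le i hi]), ← exp_logWeight hq0 (by linarith), ← exp_nat_mul]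
    refine exp_le_exp.2 ?_
    rw [hs_card] at hlog
    nlinarith [sum_nonneg fun i (_ : i ∈ s) => sq_nonneg (l i - σ / m)]
  have hlj : l j / (1 - l j) ^ 2 = (1 - σ) / σ ^ 2 := by rw [hσ_def, sub_sub_cancel]
  rw [← mul_prod_erase univ _ (mem_univ j), hlj]
  calc (1 - σ) / σ ^ 2 * ∏ i ∈ s, l i / (1 - l i) ^ 2
      ≤ (1 - σ) / σ ^ 2 * (σ / m / (1 - σ / m) ^ 2) ^ m :=
        mul_le_mul_of_nonneg_left hrest (div_nonneg (by linarith) (sq_nonneg σ))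
    _ ≤ 499 / 500 * (((m : ℝ) + 1) / (m : ℝ) ^ 2) ^ (m + 1) :=
        one_sub_div_sq_mul_pow_le (by exact_mod_cast hm2) hσ0 hσ.le
    _ = 499 / 500 * ((Fintype.card ι : ℝ) / ((Fintype.card ι : ℝ) - 1) ^ 2) ^ Fintype.card ι := by
        rw [hm]; push_cast; ring

theorem sum_sq_sub_inv_card_le_one {ι : Type*} [Fintype ι] {l : ι → ℝ} (hpos : ∀ i, 0 ≤ l i)
    (hsum : ∑ i, l i = 1) : ∑ i, (l i - 1 / (Fintype.card ι : ℝ)) ^ 2 ≤ 1 := by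
  set q := 1 / (Fintype.card ι : ℝ)
  obtain ⟨i₀, -⟩ := nonempty_of_sum_ne_zero (hsum ▸ one_ne_zero)
  have hcard : (Fintype.card ι : ℝ) ≠ 0 := Nat.cast_ne_zero.2 (Fintype.card_pos_iff.2 ⟨i₀⟩).ne'
  have hle : ∀ i, l i ≤ 1 := fun i => hsum ▸ single_le_sum (fun k _ => hpos k) (mem_univ i)
  calc ∑ i, (l i - q) ^ 2 ≤ ∑ i, (l i - 2 * q * l i + q ^ 2) :=
        sum_le_sum fun i _ => by nlinarith [hpos i, hle i]
    _ = 1 - 2 * q + Fintype.card ι * q ^ 2 := by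
        rw [sum_add_distrib, sum_sub_distrib, ← mul_sum, hsum, mul_one, sum_const, card_univ,
          nsmul_eq_mul]
    _ ≤ 1 := by
        have : 0 ≤ q := by positivity
        simp only [q]; field_simp; linarith

theorem exp_neg_le_one_sub_half {x : ℝ} (h0 : 0 ≤ x) (h1 : x ≤ 1) : exp (-x) ≤ 1 - x / 2 :=
  calc exp (-x) = (exp x)⁻¹ := exp_neg x
    _ ≤ (1 + x)⁻¹ := inv_anti₀ (by linarith) (by linarith [add_one_le_exp x])
    _ ≤ 1 - x / 2 := by rw [inv_eq_one_div, div_le_iff₀ (by linarith)]; nlinarith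

theorem prod_div_sq_le {ι : Type*} [Fintype ι] (hn : 3 ≤ Fintype.card ι) {l : ι → ℝ}
    (hpos : ∀ i, 0 < l i) (hsum : ∑ i, l i = 1) :
    ∏ i, l i / (1 - l i) ^ 2
      ≤ ((Fintype.card ι : ℝ) / ((Fintype.card ι : ℝ) - 1) ^ 2) ^ Fintype.card ι
        * (1 - 1 / 500 * ∑ i, (l i - 1 / (Fintype.card ι : ℝ)) ^ 2) := by
  have hS1 := sum_sq_sub_inv_card_le_one (fun i => (hpos i).le) hsum
  have hS0 : 0 ≤ ∑ i, (l i - 1 / (Fintype.card ι : ℝ)) ^ 2 := sum_nonneg fun i _ => sq_nonneg _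
  by_cases hhalf : ∀ i, l i ≤ 1 / 2
  · refine (prod_div_sq_le_of_forall_le_half hn hpos hhalf hsum).trans ?_
    gcongr
    linarith [exp_neg_le_one_sub_half (x := 1 / 162 * ∑ i, (l i - 1 / (Fintype.card ι : ℝ)) ^ 2)
      (by linarith) (by linarith)]
  · classical
    obtain ⟨j, hj⟩ := not_forall.1 hhalf
    refine (prod_div_sq_le_of_half_lt hn hpos hsum (not_le.1 hj)).trans ?_
    rw [mul_comm]
    gcongr
    linarith

theorem sqrt_prod_div_prod_one_sub_le {ι : Type*} [Fintype ι] (hn : 3 ≤ Fintype.card ι)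
    {l : ι → ℝ} (hpos : ∀ i, 0 < l i) (hsum : ∑ i, l i = 1) :
    √(∏ i, l i) / ∏ i, (1 - l i)
      ≤ ((Fintype.card ι : ℝ) / ((Fintype.card ι : ℝ) - 1) ^ 2) ^ ((Fintype.card ι : ℝ) / 2)
        * (1 - 1 / 1000 * ∑ i, (l i - 1 / (Fintype.card ι : ℝ)) ^ 2) := by
  set X := (Fintype.card ι : ℝ) / ((Fintype.card ι : ℝ) - 1) ^ 2
  set S := ∑ i, (l i - 1 / (Fintype.card ι : ℝ)) ^ 2
  have hS1 : S ≤ 1 := sum_sq_sub_inv_card_le_one (fun i => (hpos i).le) hsum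
  have hlt : ∀ i, l i < 1 := fun i => by
    obtain ⟨k, hki⟩ := Fintype.exists_ne_of_one_lt_card (by omega) i
    exact hsum ▸ single_lt_sum hki (mem_univ i) (mem_univ k) (hpos k) fun k _ _ => (hpos k).le
  have hD : 0 < ∏ i, (1 - l i) := prod_pos fun i _ => sub_pos.2 (hlt i)
  have hX : 0 ≤ X := by positivity
  have hXsq : (X ^ ((Fintype.card ι : ℝ) / 2)) ^ 2 = X ^ Fintype.card ι := by
    rw [← rpow_natCast, ← rpow_mul hX, ← rpow_natCast]; ring_nf
  rw [← sqrt_sq hD.le, ← sqrt_div' _ (sq_nonneg _), ← Finset.prod_pow, ← prod_div_distrib,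
    sqrt_le_left (mul_nonneg (rpow_nonneg hX _) (by linarith))]
  calc ∏ i, l i / (1 - l i) ^ 2 ≤ X ^ Fintype.card ι * (1 - 1 / 500 * S) :=
        prod_div_sq_le hn hpos hsum
    _ ≤ X ^ Fintype.card ι * (1 - 1 / 1000 * S) ^ 2 := by gcongr; nlinarith [sq_nonneg S]
    _ = (X ^ ((Fintype.card ι : ℝ) / 2) * (1 - 1 / 1000 * S)) ^ 2 := by rw [mul_pow, hXsq]

theorem Matrix.IsHermitian.det_one_sub {𝕜 n : Type*} [RCLike 𝕜] [Fintype n] [DecidableEq n]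
    {A : Matrix n n 𝕜} (hA : A.IsHermitian) :
    (1 - A).det = ∏ i, (1 - (hA.eigenvalues i : 𝕜)) := by
  rw [← map_one (Matrix.scalar n), ← Matrix.eval_charpoly, hA.charpoly_eq, Polynomial.eval_prod]
  simp

/-- Lemma (linear algebra, BCG Appendix B5): for a symmetric positive definite `n × n`
real matrix `H` with trace `1` (`n ≥ 3`), there is a constant `A = A(n) > 0` with
`det H ^ (1/2) / det (I - H) ≤ (n / (n-1)^2)^(n/2) * (1 - A * ∑ (λᵢ - 1/n)²)`,
where `λ₁, …, λₙ` are the eigenvalues of `H`. -/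
theorem stmt_0 (n : ℕ) (hn : 3 ≤ n) :
    ∃ A : ℝ, 0 < A ∧
      ∀ (H : Matrix (Fin n) (Fin n) ℝ) (hpd : H.PosDef), H.trace = 1 →
        Real.sqrt H.det / (1 - H).det ≤
          ((n : ℝ) / ((n : ℝ) - 1) ^ 2) ^ ((n : ℝ) / 2) *
            (1 - A * ∑ i, (hpd.1.eigenvalues i - 1 / (n : ℝ)) ^ 2) := by
  refine ⟨1 / 1000, by norm_num, fun H hpd htr => ?_⟩
  have hsum : ∑ i, hpd.1.eigenvalues i = 1 := by
    simpa [htr] using hpd.1.trace_eq_sum_eigenvalues.symm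
  rw [hpd.1.det_eq_prod_eigenvalues, hpd.1.det_one_sub]
  simpa using sqrt_prod_div_prod_one_sub_le (by simpa using hn) hpd.eigenvalues_pos hsum
end

section
/- Let L be a positive semidefinite symmetric n×n real matrix with trace(L) ≤ n(1+β) and det(L) ≥ (1-α)² for small α, β > 0. Then there exists a function α₃(α, β) with α₃ → 0 as α, β → 0 such that ‖L - Id‖ ≤ α₃(α, β). In particular, near-equality in the arithmetic-geometric mean inequality for the eigenvalues of L forces L to be close to the identity. -/
/-!
Let `λᵢ` be the eigenvalues of `L`; they are positive because `det L > 0`. The defect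
`φ(x) = x - 1 - log x ≥ 0` satisfies `∑ φ(λᵢ) = tr L - n - log det L ≤ nβ - 2 log (1 - α)`, and
on `(0, M]` it dominates the square: `(x - 1)² ≤ (√M + 1)² φ(x)`. Taking `M = n(1 + β)`, which
bounds every eigenvalue, gives
`‖L - 1‖²_F = ∑ (λᵢ - 1)² ≤ (√(n(1 + β)) + 1)² (nβ - 2 log (1 - α))`, which tends to `0`.
-/

open Finset Matrix

theorem sq_sub_one_le_mul_sub_one_sub_log {x M : ℝ} (hx : 0 < x) (hxM : x ≤ M) :
    (x - 1) ^ 2 ≤ (√M + 1) ^ 2 * (x - 1 - Real.log x) := by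
  set s := √x
  have hs : 0 < s := Real.sqrt_pos.2 hx
  have hsx : s ^ 2 = x := Real.sq_sqrt hx.le
  have hsM : s ≤ √M := Real.sqrt_le_sqrt hxM
  have hlog : Real.log x ≤ 2 * (s - 1) := by
    rw [← hsx, Real.log_pow, Nat.cast_ofNat]
    linarith [Real.log_le_sub_one_of_pos hs]
  calc (x - 1) ^ 2 = (s + 1) ^ 2 * (s - 1) ^ 2 := by rw [← hsx]; ring
    _ ≤ (√M + 1) ^ 2 * (x - 1 - Real.log x) := by
      gcongr
      nlinarith

theorem sum_sq_sub_one_le_of_sum_le_of_le_prod {ι : Type*} [Fintype ι] {μ : ι → ℝ}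
    {T P : ℝ} (hpos : ∀ i, 0 < μ i) (hsum : ∑ i, μ i ≤ T) (hP : 0 < P) (hprod : P ≤ ∏ i, μ i) :
    ∑ i, (μ i - 1) ^ 2 ≤ (√T + 1) ^ 2 * (T - Fintype.card ι - Real.log P) := by
  have hle : ∀ i, μ i ≤ T := fun i =>
    (single_le_sum (fun j _ => (hpos j).le) (mem_univ i)).trans hsum
  have hlog : Real.log P ≤ ∑ i, Real.log (μ i) := by
    rw [← Real.log_prod fun i _ => (hpos i).ne']
    exact Real.log_le_log hP hprod
  calc ∑ i, (μ i - 1) ^ 2 ≤ ∑ i, (√T + 1) ^ 2 * (μ i - 1 - Real.log (μ i)) :=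
        sum_le_sum fun i _ => sq_sub_one_le_mul_sub_one_sub_log (hpos i) (hle i)
    _ = (√T + 1) ^ 2 * (∑ i, μ i - Fintype.card ι - ∑ i, Real.log (μ i)) := by
        simp [← mul_sum, sum_sub_distrib]
    _ ≤ (√T + 1) ^ 2 * (T - Fintype.card ι - Real.log P) := by gcongr

theorem Matrix.IsHermitian.sum_sq_eq_sum_sq_eigenvalues {ι : Type*} [Fintype ι]
    [DecidableEq ι] {A : Matrix ι ι ℝ} (hA : A.IsHermitian) :
    ∑ i, ∑ j, A i j ^ 2 = ∑ i, hA.eigenvalues i ^ 2 := by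
  set U : Matrix ι ι ℝ := (hA.eigenvectorUnitary : Matrix ι ι ℝ)
  set d := hA.eigenvalues
  have hUU : star U * U = 1 := Unitary.star_mul_self_of_mem hA.eigenvectorUnitary.2
  have hA' : A = U * diagonal d * star U := by
    simpa [Unitary.conjStarAlgAut_apply] using hA.spectral_theorem
  have hsym : ∀ i j, A j i = A i j := fun i j => by
    simpa using congrFun (congrFun hA i) j
  calc ∑ i, ∑ j, A i j ^ 2 = (A * A).trace := by
        simp [trace, mul_apply, sq, hsym]
    _ = (U * diagonal (fun i => d i ^ 2) * star U).trace := by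
        rw [hA']
        simp only [Matrix.mul_assoc, ← Matrix.mul_assoc (star U) U, hUU, Matrix.one_mul]
        rw [← Matrix.mul_assoc (diagonal d), diagonal_mul_diagonal]
        simp only [sq]
    _ = ∑ i, d i ^ 2 := by
        rw [trace_mul_cycle, hUU, Matrix.one_mul, trace_diagonal]

theorem Matrix.IsHermitian.sum_sq_sub_one_eq_sum_sq_eigenvalues_sub_one {ι : Type*}
    [Fintype ι] [DecidableEq ι] {A : Matrix ι ι ℝ} (hA : A.IsHermitian) :
    ∑ i, ∑ j, (A i j - (1 : Matrix ι ι ℝ) i j) ^ 2 = ∑ i, (hA.eigenvalues i - 1) ^ 2 := by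
  have htr := hA.trace_eq_sum_eigenvalues
  have hsq := hA.sum_sq_eq_sum_sq_eigenvalues
  simp only [trace, diag, RCLike.ofReal_real_eq_id, id] at htr
  simp only [sub_sq, sum_add_distrib, sum_sub_distrib, one_apply, mul_ite, mul_one, mul_zero,
    sum_ite_eq, mem_univ, if_true, ← mul_sum, hsq, htr]
  simp

noncomputable def agmDefectBound (n : ℕ) (α β : ℝ) : ℝ :=
  (√(n * (1 + β)) + 1) * √(n * β - 2 * Real.log (1 - α))

theorem continuousAt_agmDefectBound (n : ℕ) :
    ContinuousAt (Function.uncurry (agmDefectBound n)) (0, 0) := by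
  unfold agmDefectBound
  fun_prop (disch := norm_num)

theorem agmDefectBound_zero_zero (n : ℕ) : agmDefectBound n 0 0 = 0 := by
  simp [agmDefectBound]

theorem exists_pos_forall_abs_le_imp_le {f : ℝ → ℝ → ℝ}
    (hf : ContinuousAt (Function.uncurry f) (0, 0)) (h0 : f 0 0 = 0) {ε : ℝ} (hε : 0 < ε) :
    ∃ δ > 0, ∀ α β, |α| ≤ δ → |β| ≤ δ → f α β ≤ ε := by
  obtain ⟨δ, hδ, hf⟩ := Metric.continuousAt_iff.1 hf ε hε
  refine ⟨δ / 2, half_pos hδ, fun α β hα hβ => ?_⟩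
  have hdist : dist (α, β) (0, 0) < δ := by
    rw [Prod.dist_eq, Real.dist_0_eq_abs, Real.dist_0_eq_abs]
    exact max_lt (by linarith) (by linarith)
  have := hf hdist
  rw [Function.uncurry_apply_pair, Function.uncurry_apply_pair, h0, Real.dist_0_eq_abs] at this
  exact (le_abs_self _).trans this.le

theorem Matrix.PosSemidef.sqrt_sum_sq_sub_one_le_agmDefectBound {ι : Type*} [Fintype ι]
    [DecidableEq ι] {α β : ℝ} {L : Matrix ι ι ℝ} (hα : α < 1) (hL : L.PosSemidef)
    (htr : L.trace ≤ Fintype.card ι * (1 + β)) (hdet : (1 - α) ^ 2 ≤ L.det) :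
    √(∑ i, ∑ j, (L i j - (1 : Matrix ι ι ℝ) i j) ^ 2) ≤
      agmDefectBound (Fintype.card ι) α β := by
  have hα' : 0 < (1 - α) ^ 2 := pow_pos (sub_pos.2 hα) 2
  have hpos := (hL.posDef_iff_det_ne_zero.2 (hα'.trans_le hdet).ne').eigenvalues_pos
  rw [hL.1.trace_eq_sum_eigenvalues] at htr
  rw [hL.1.det_eq_prod_eigenvalues] at hdet
  have key := sum_sq_sub_one_le_of_sum_le_of_le_prod hpos (by simpa using htr) hα'
    (by simpa using hdet)
  rw [Real.log_pow, Nat.cast_ofNat] at key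
  rw [hL.1.sum_sq_sub_one_eq_sum_sq_eigenvalues_sub_one, agmDefectBound,
    ← Real.sqrt_sq (by positivity : 0 ≤ √(Fintype.card ι * (1 + β)) + 1),
    ← Real.sqrt_mul (sq_nonneg _)]
  exact Real.sqrt_le_sqrt (key.trans_eq (by ring))

theorem stmt_1_general (n : ℕ) :
    ∃ α₃ : ℝ → ℝ → ℝ,
      (∀ ε : ℝ, 0 < ε → ∃ δ : ℝ, 0 < δ ∧
        ∀ α β : ℝ, 0 < α → α ≤ δ → 0 < β → β ≤ δ → α₃ α β ≤ ε) ∧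
      ∀ (α β : ℝ) (L : Matrix (Fin n) (Fin n) ℝ), 0 < α → α < 1 → 0 < β →
        L.PosSemidef → L.trace ≤ (n : ℝ) * (1 + β) → (1 - α) ^ 2 ≤ L.det →
        Real.sqrt (∑ i, ∑ j, (L i j - (1 : Matrix (Fin n) (Fin n) ℝ) i j) ^ 2)
          ≤ α₃ α β := by
  refine ⟨agmDefectBound n, fun ε hε => ?_, fun α β L _ hα _ hL htr hdet => ?_⟩
  · obtain ⟨δ, hδ, h⟩ := exists_pos_forall_abs_le_imp_le (continuousAt_agmDefectBound n)
      (agmDefectBound_zero_zero n) hε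
    exact ⟨δ, hδ, fun α β hα hαδ hβ hβδ =>
      h α β ((abs_of_pos hα).trans_le hαδ) ((abs_of_pos hβ).trans_le hβδ)⟩
  · simpa using hL.sqrt_sum_sq_sub_one_le_agmDefectBound hα (by simpa using htr) hdet

/-- Near-equality in the arithmetic-geometric mean inequality: a positive semidefinite
symmetric matrix `L` with `trace L ≤ n (1 + β)` and `det L ≥ (1 - α)²` is close to the
identity, quantitatively: `‖L - Id‖ ≤ α₃(α, β)` (Frobenius norm) with `α₃ → 0` as
`α, β → 0`. -/
theorem stmt_1 (n : ℕ) (hn : 1 ≤ n) :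
    ∃ α₃ : ℝ → ℝ → ℝ,
      (∀ ε : ℝ, 0 < ε → ∃ δ : ℝ, 0 < δ ∧
        ∀ α β : ℝ, 0 < α → α ≤ δ → 0 < β → β ≤ δ → α₃ α β ≤ ε) ∧
      ∀ (α β : ℝ) (L : Matrix (Fin n) (Fin n) ℝ), 0 < α → α < 1 → 0 < β →
        L.PosSemidef → L.trace ≤ (n : ℝ) * (1 + β) → (1 - α) ^ 2 ≤ L.det →
        Real.sqrt (∑ i, ∑ j, (L i j - (1 : Matrix (Fin n) (Fin n) ℝ) i j) ^ 2)
          ≤ α₃ α β :=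
  stmt_1_general n
end

section
/- Let f : Y → X be a C¹ map between n-dimensional Riemannian manifolds, y ∈ Y, and suppose H is a symmetric positive definite endomorphism of T_{f(y)}X with eigenvalues in (0,1), and H' a symmetric positive semidefinite endomorphism of T_yY with trace 1, such that for all u ∈ T_yY and v ∈ T_{f(y)}X, |⟨(I - H)(d_yf(u)), v⟩| ≤ c·⟨H v, v⟩^{1/2}·⟨H' u, u⟩^{1/2}. Then |Jac f(y)| ≤ (c/√n)ⁿ · det(H)^{1/2} / det(I - H). -/
/-!
Write `H = S²` with `S` symmetric and put `B = S⁻¹ (1 - H) f`. Testing the hypothesis at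
`v = S⁻¹ (B u)` gives `‖B u‖² ≤ c² ⟨H' u, u⟩`. In an orthonormal eigenbasis `(eᵢ)` of `BᵀB`,
`det(B)² = ∏ ‖B eᵢ‖² ≤ c²ⁿ ∏ ⟨H' eᵢ, eᵢ⟩`, and AM-GM together with `∑ ⟨H' eᵢ, eᵢ⟩ = tr H' = 1`
bounds this by `(c² / n)ⁿ`. Finally `det(1 - H) det f = det S det B` with `det S = √(det H)`.
-/

open Matrix

theorem Real.prod_le_sum_div_card_pow {ι : Type*} [Fintype ι] (z : ι → ℝ) (hz : ∀ i, 0 ≤ z i) :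
    ∏ i, z i ≤ ((∑ i, z i) / Fintype.card ι) ^ Fintype.card ι := by
  cases isEmpty_or_nonempty ι
  · simp
  have hcard : (0 : ℝ) < Fintype.card ι := by exact_mod_cast Fintype.card_pos
  have amgm := Real.geom_mean_le_arith_mean Finset.univ (fun _ => 1) z (fun _ _ => zero_le_one)
    (by simpa using hcard) (fun i _ => hz i)
  simp only [Real.rpow_one, Finset.sum_const, Finset.card_univ, nsmul_eq_mul, mul_one,
    one_mul] at amgm
  rw [Real.rpow_inv_le_iff_of_pos (Finset.prod_nonneg fun i _ => hz i)
    (div_nonneg (Finset.sum_nonneg fun i _ => hz i) hcard.le) hcard] at amgm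
  exact_mod_cast amgm

theorem Real.le_sq_mul_of_le_mul_sqrt_mul_sqrt {t c d : ℝ} (ht : 0 ≤ t) (hd : 0 ≤ d)
    (h : t ≤ c * √t * √d) : t ≤ c ^ 2 * d := by
  rcases ht.eq_or_lt with rfl | ht
  · positivity
  have hroot : √t ≤ c * √d := by
    have := Real.sqrt_pos.2 ht
    nlinarith [Real.mul_self_sqrt ht.le]
  calc t = √t ^ 2 := (Real.sq_sqrt ht.le).symm
    _ ≤ (c * √d) ^ 2 := pow_le_pow_left₀ (Real.sqrt_nonneg t) hroot 2
    _ = c ^ 2 * d := by rw [mul_pow, Real.sq_sqrt hd]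

theorem OrthonormalBasis.sum_dotProduct_mulVec_eq_trace {ι : Type*} [Fintype ι] [DecidableEq ι]
    (b : OrthonormalBasis ι ℝ (EuclideanSpace ℝ ι)) (K : Matrix ι ι ℝ) :
    ∑ i, (K *ᵥ ⇑(b i)) ⬝ᵥ ⇑(b i) = K.trace := by
  have h := LinearMap.trace_eq_sum_inner (toEuclideanLin K) b
  rw [toEuclideanLin_eq_toLin_orthonormal, LinearMap.trace_eq_matrix_trace ℝ
    (EuclideanSpace.basisFun ι ℝ).toBasis, LinearMap.toMatrix_toLin,
    ← toEuclideanLin_eq_toLin_orthonormal] at h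
  simp [h, EuclideanSpace.inner_eq_star_dotProduct]

namespace Matrix

variable {ι : Type*} [Fintype ι] [DecidableEq ι]

open scoped MatrixOrder in
theorem PosDef.exists_isSymm_mul_self_eq {H : Matrix ι ι ℝ} (hH : H.PosDef) :
    ∃ S : Matrix ι ι ℝ, S.IsSymm ∧ S * S = H ∧ S.det = √H.det := by
  have hS : (CFC.sqrt H).PosSemidef := (CFC.sqrt_nonneg H).posSemidef
  have hSS : CFC.sqrt H * CFC.sqrt H = H := CFC.sqrt_mul_sqrt_self H hH.posSemidef.nonneg
  refine ⟨CFC.sqrt H, hS.1, hSS, ?_⟩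
  rw [← Real.sqrt_mul_self hS.det_nonneg, ← det_mul, hSS]

theorem dotProduct_self_le_of_abs_dotProduct_le {S M : Matrix ι ι ℝ} (hS : S.IsSymm)
    (hSdet : IsUnit S.det) {c d : ℝ} (hd : 0 ≤ d) (u : ι → ℝ)
    (h : ∀ v, |(M *ᵥ u) ⬝ᵥ v| ≤ c * √(((S * S) *ᵥ v) ⬝ᵥ v) * √d) :
    ((S⁻¹ * M) *ᵥ u) ⬝ᵥ ((S⁻¹ * M) *ᵥ u) ≤ c ^ 2 * d := by
  set w := (S⁻¹ * M) *ᵥ u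
  have hsymm : ∀ x y, (S *ᵥ x) ⬝ᵥ y = x ⬝ᵥ (S *ᵥ y) := fun x y => by
    rw [dotProduct_comm, dotProduct_mulVec, ← vecMul_transpose, hS.eq, dotProduct_comm]
  have hMu : M *ᵥ u = S *ᵥ w := by
    rw [mulVec_mulVec, ← mul_assoc, mul_nonsing_inv S hSdet, one_mul]
  have hSinv : S *ᵥ (S⁻¹ *ᵥ w) = w := by
    rw [mulVec_mulVec, mul_nonsing_inv S hSdet, one_mulVec]
  have hpair : (M *ᵥ u) ⬝ᵥ (S⁻¹ *ᵥ w) = w ⬝ᵥ w := by rw [hMu, hsymm, hSinv]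
  have hquad : ((S * S) *ᵥ (S⁻¹ *ᵥ w)) ⬝ᵥ (S⁻¹ *ᵥ w) = w ⬝ᵥ w := by
    rw [← mulVec_mulVec, hSinv, hsymm, hSinv]
  have hw : 0 ≤ w ⬝ᵥ w := Finset.sum_nonneg fun i _ => mul_self_nonneg (w i)
  refine Real.le_sq_mul_of_le_mul_sqrt_mul_sqrt hw hd ?_
  simpa only [hpair, hquad, abs_of_nonneg hw] using h (S⁻¹ *ᵥ w)

theorem PosSemidef.det_le_trace_div_card_pow_of_dotProduct_le {G K : Matrix ι ι ℝ}
    (hG : G.PosSemidef) (hGK : ∀ x, (G *ᵥ x) ⬝ᵥ x ≤ (K *ᵥ x) ⬝ᵥ x) :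
    G.det ≤ (K.trace / Fintype.card ι) ^ Fintype.card ι := by
  set v := hG.1.eigenvectorBasis
  have heig : ∀ i, hG.1.eigenvalues i = (G *ᵥ ⇑(v i)) ⬝ᵥ ⇑(v i) := fun i => by
    simp [hG.1.eigenvalues_eq i, v, dotProduct_comm]
  have hle : ∀ i, hG.1.eigenvalues i ≤ (K *ᵥ ⇑(v i)) ⬝ᵥ ⇑(v i) := fun i => heig i ▸ hGK _
  calc G.det = ∏ i, hG.1.eigenvalues i := by simpa using hG.1.det_eq_prod_eigenvalues
    _ ≤ ∏ i, (K *ᵥ ⇑(v i)) ⬝ᵥ ⇑(v i) :=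
      Finset.prod_le_prod (fun i _ => hG.eigenvalues_nonneg i) fun i _ => hle i
    _ ≤ ((∑ i, (K *ᵥ ⇑(v i)) ⬝ᵥ ⇑(v i)) / Fintype.card ι) ^ Fintype.card ι :=
      Real.prod_le_sum_div_card_pow _ fun i => (hG.eigenvalues_nonneg i).trans (hle i)
    _ = (K.trace / Fintype.card ι) ^ Fintype.card ι := by
      rw [v.sum_dotProduct_mulVec_eq_trace]

theorem sq_det_le_of_dotProduct_le {B K : Matrix ι ι ℝ} {c : ℝ}
    (h : ∀ u, (B *ᵥ u) ⬝ᵥ (B *ᵥ u) ≤ c ^ 2 * ((K *ᵥ u) ⬝ᵥ u)) :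
    B.det ^ 2 ≤ (c ^ 2 * K.trace / Fintype.card ι) ^ Fintype.card ι := by
  have hG : (Bᵀ * B).PosSemidef := by
    simpa using posSemidef_conjTranspose_mul_self B
  have hGK : ∀ x, ((Bᵀ * B) *ᵥ x) ⬝ᵥ x ≤ ((c ^ 2 • K) *ᵥ x) ⬝ᵥ x := fun x => by
    rw [← mulVec_mulVec, dotProduct_comm, dotProduct_mulVec, vecMul_transpose, smul_mulVec,
      smul_dotProduct, smul_eq_mul]
    exact h x
  simpa [sq, trace_smul, mul_div_assoc] using hG.det_le_trace_div_card_pow_of_dotProduct_le hGK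

end Matrix

theorem stmt_4_general (n : ℕ) (c : ℝ) (hc : 0 ≤ c)
    (f H H' : Matrix (Fin n) (Fin n) ℝ)
    (hH : H.PosDef) (hH1 : (1 - H).PosDef)
    (hH' : H'.PosSemidef) (htr : H'.trace = 1)
    (hineq : ∀ u v : Fin n → ℝ,
      |dotProduct (((1 - H) * f).mulVec u) v| ≤
        c * Real.sqrt (dotProduct (H.mulVec v) v) *
          Real.sqrt (dotProduct (H'.mulVec u) u)) :
    |f.det| ≤ (c / Real.sqrt n) ^ n * Real.sqrt H.det / (1 - H).det := by
  obtain ⟨S, hS, hSS, hSdet⟩ := hH.exists_isSymm_mul_self_eq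
  have hSunit : IsUnit S.det := by
    rw [hSdet]
    exact (Real.sqrt_pos.2 hH.det_pos).ne'.isUnit
  set B := S⁻¹ * ((1 - H) * f)
  have hB : ∀ u, (B *ᵥ u) ⬝ᵥ (B *ᵥ u) ≤ c ^ 2 * ((H' *ᵥ u) ⬝ᵥ u) := fun u =>
    dotProduct_self_le_of_abs_dotProduct_le hS hSunit
      (by simpa [dotProduct_comm] using hH'.re_dotProduct_nonneg u) u (hSS ▸ hineq u)
  have hBdet : |B.det| ≤ (c / √n) ^ n := by
    refine abs_le_of_sq_le_sq ?_ (by positivity)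
    calc B.det ^ 2 ≤ (c ^ 2 * H'.trace / n) ^ n := by
          simpa using sq_det_le_of_dotProduct_le hB
      _ = ((c / √n) ^ n) ^ 2 := by
          rw [htr, mul_one, ← pow_mul, mul_comm n, pow_mul, div_pow c, Real.sq_sqrt n.cast_nonneg]
  have hfactor : (1 - H).det * f.det = S.det * B.det := by
    rw [← det_mul, ← det_mul, ← mul_assoc, mul_nonsing_inv S hSunit, one_mul]
  have hD := hH1.det_pos
  calc |f.det| = |(1 - H).det * f.det| / (1 - H).det := by
        rw [abs_mul, abs_of_pos hD, mul_div_cancel_left₀ _ hD.ne']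
    _ = |B.det| * √H.det / (1 - H).det := by
        rw [hfactor, abs_mul, hSdet, abs_of_nonneg (Real.sqrt_nonneg _), mul_comm]
    _ ≤ (c / √n) ^ n * √H.det / (1 - H).det := by gcongr

/-- Lemma 2.4 (det-inequality) as a linear algebra fact. The differential `d_y f` is
represented by the matrix `f` (in orthonormal bases), `H` is symmetric positive definite
with all eigenvalues in `(0,1)` (encoded by `H` and `1 - H` positive definite), and `H'`
is symmetric positive semidefinite with trace `1`. If for all `u, v`
`|⟨(I - H)(f u), v⟩| ≤ c √⟨H v, v⟩ √⟨H' u, u⟩`, then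
`|Jac f| ≤ (c/√n)ⁿ √(det H) / det(I - H)`. -/
theorem stmt_4 (n : ℕ) (hn : 1 ≤ n) (c : ℝ) (hc : 0 ≤ c)
    (f H H' : Matrix (Fin n) (Fin n) ℝ)
    (hH : H.PosDef) (hH1 : (1 - H).PosDef)
    (hH' : H'.PosSemidef) (htr : H'.trace = 1)
    (hineq : ∀ u v : Fin n → ℝ,
      |dotProduct (((1 - H) * f).mulVec u) v| ≤
        c * Real.sqrt (dotProduct (H.mulVec v) v) *
          Real.sqrt (dotProduct (H'.mulVec u) u)) :
    |f.det| ≤ (c / Real.sqrt n) ^ n * Real.sqrt H.det / (1 - H).det :=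
  stmt_4_general n c hc f H H' hH hH1 hH' htr hineq
end

section
/- Let f : Y → X be a C¹ map between n-dimensional Riemannian manifolds satisfying, at a point y, the bilinear estimate |⟨(I - H_y)(d_yf(u)), v⟩| ≤ c·⟨H_y v, v⟩^{1/2}·‖u‖ for all unit u ∈ T_yY, v ∈ T_{f(y)}X, where H_y is symmetric positive definite with largest eigenvalue λₙ < 1. Then the operator norm of d_yf satisfies ‖d_yf‖ ≤ c·√λₙ / (1 - λₙ). -/
open Matrix

/- Put `v = f u`. The left-hand side of the bilinear estimate is `‖v‖² - ⟨H v, v⟩`, which is at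
least `(1 - λₙ) ‖v‖²`, while `⟨H v, v⟩ ≤ λₙ ‖v‖²` bounds the right-hand side by `c √λₙ ‖v‖ ‖u‖`.
Dividing by `‖v‖` gives the claim. -/

open scoped ComplexOrder MatrixOrder in
theorem Matrix.IsHermitian.dotProduct_mulVec_le_mul {𝕜 ι : Type*} [RCLike 𝕜] [Fintype ι]
    [DecidableEq ι] {H : Matrix ι ι 𝕜} (hH : H.IsHermitian) {μ : ℝ}
    (hμ : ∀ i, hH.eigenvalues i ≤ μ) (v : ι → 𝕜) :
    star v ⬝ᵥ (H *ᵥ v) ≤ μ * (star v ⬝ᵥ v) := by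
  have hle : H ≤ algebraMap ℝ (Matrix ι ι 𝕜) μ := by
    refine le_algebraMap_of_spectrum_le ?_ hH.isSelfAdjoint
    rw [hH.spectrum_real_eq_range_eigenvalues]
    rintro _ ⟨i, rfl⟩
    exact hμ i
  simpa [sub_mulVec, dotProduct_sub, Algebra.algebraMap_eq_smul_one, smul_mulVec] using
    (le_iff.mp hle).dotProduct_mulVec_nonneg v

theorem le_div_mul_of_mul_sq_le_mul {a b s x : ℝ} (ha : 0 < a) (hbs : 0 ≤ b * s) (hx : 0 ≤ x)
    (h : a * x ^ 2 ≤ b * s * x) : x ≤ b / a * s := by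
  rw [div_mul_eq_mul_div, le_div_iff₀ ha]
  rcases hx.eq_or_lt with rfl | hx
  · simpa using hbs
  · exact le_of_mul_le_mul_right (by nlinarith) hx

/-- Pointwise differential bound (inequality 2.11): if at a point the bilinear estimate
`|⟨(I - H)(f u), v⟩| ≤ c √⟨H v, v⟩ ‖u‖` holds, where `H` is symmetric positive definite
with largest eigenvalue `λₙ < 1`, then the operator norm of `d_y f` (represented by the
matrix `f` in orthonormal bases) satisfies `‖f‖ ≤ c √λₙ / (1 - λₙ)`. -/
theorem stmt_5 (n : ℕ) (c : ℝ) (hc : 0 ≤ c)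
    (f H : Matrix (Fin n) (Fin n) ℝ) (hH : H.PosDef)
    (i₀ : Fin n) (hmax : ∀ i, hH.1.eigenvalues i ≤ hH.1.eigenvalues i₀)
    (hlt : hH.1.eigenvalues i₀ < 1)
    (hineq : ∀ u v : Fin n → ℝ,
      |dotProduct (((1 - H) * f).mulVec u) v| ≤
        c * Real.sqrt (dotProduct (H.mulVec v) v) *
          Real.sqrt (dotProduct u u)) :
    ∀ u : Fin n → ℝ,
      Real.sqrt (dotProduct (f.mulVec u) (f.mulVec u)) ≤
        c * Real.sqrt (hH.1.eigenvalues i₀) / (1 - hH.1.eigenvalues i₀) *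
          Real.sqrt (dotProduct u u) := by
  intro u
  set lam := hH.1.eigenvalues i₀
  set v := f *ᵥ u
  have hlam : 0 ≤ lam := (hH.eigenvalues_pos i₀).le
  have hv : 0 ≤ v ⬝ᵥ v := by simpa using dotProduct_star_self_nonneg v
  have hHv : H *ᵥ v ⬝ᵥ v ≤ lam * (v ⬝ᵥ v) := by
    simpa [dotProduct_comm] using hH.1.dotProduct_mulVec_le_mul hmax v
  have hpair : ((1 - H) * f) *ᵥ u ⬝ᵥ v = v ⬝ᵥ v - H *ᵥ v ⬝ᵥ v := by
    rw [← mulVec_mulVec, sub_mulVec, one_mulVec, sub_dotProduct]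
  refine le_div_mul_of_mul_sq_le_mul (by linarith) (by positivity) (Real.sqrt_nonneg _) ?_
  calc (1 - lam) * √(v ⬝ᵥ v) ^ 2 = v ⬝ᵥ v - lam * (v ⬝ᵥ v) := by
        rw [Real.sq_sqrt hv]; ring
    _ ≤ |((1 - H) * f) *ᵥ u ⬝ᵥ v| := by rw [hpair]; exact le_abs.mpr (.inl (by linarith))
    _ ≤ c * √(H *ᵥ v ⬝ᵥ v) * √(u ⬝ᵥ u) := hineq u v
    _ ≤ c * √(lam * (v ⬝ᵥ v)) * √(u ⬝ᵥ u) := by gcongr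
    _ = c * √lam * √(u ⬝ᵥ u) * √(v ⬝ᵥ v) := by rw [Real.sqrt_mul hlam]; ring
end

section
/- Suppose two balls B₁, B₂ of radius r' in hyperbolic n-space have centers at distance ≤ 2ρr', 0 < ρ < 1, with r' below the injectivity radius. Then vol(B₁ ∪ B₂) ≤ (2·vol_{ℍⁿ}(r')/vol_{ℝⁿ}(r') − (1−ρ)ⁿ)·vol_{ℝⁿ}(r'), where vol_{ℝⁿ}(r') = ω_n r'ⁿ is the Euclidean ball volume. Consequently, if vol(B₁ ∪ B₂) ≥ 2ϑ·vol_{ℝⁿ}(r') for some ϑ close to 1 and r' ≤ ε, then (1−ρ)ⁿ ≤ 2(vol_{ℍⁿ}(ε)/vol_{ℝⁿ}(ε) − ϑ). -/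
/-!
The lens `B₁ ∩ B₂` contains the ball of radius `(1 - ρ) r'` about a midpoint of the centers,
so inclusion–exclusion gives `vol(B₁ ∪ B₂) ≤ 2 vol_ℍ(r') - vol_ℍ((1 - ρ) r')`, and
`vol_ℍ ≥ vol_ℝ = ω_n rⁿ` bounds the subtracted term below by `(1 - ρ)ⁿ vol_ℝ(r')`.
For the consequence, `vol_ℍ(r) / vol_ℝ(r)` is nondecreasing in `r`: substituting `t = c s`
with `c = r / ε` and using `sinh (c s) ≤ c sinh s` (convexity of `sinh` on `[0, ∞)`) gives
`vol_ℍ(r) ≤ cⁿ vol_ℍ(ε)`.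
-/

open MeasureTheory Real Set

/-- Hyperbolic ball volume (up to the constant `vol(S^{n-1})`, shared with
`eucBallVol` so that all ratios are the true ones). -/
noncomputable def hypBallVol (n : ℕ) (r : ℝ) : ℝ :=
  ∫ t in (0 : ℝ)..r, Real.sinh t ^ (n - 1)

/-- Euclidean ball volume `ω_n rⁿ` (with the same normalizing constant as
`hypBallVol`). -/
noncomputable def eucBallVol (n : ℕ) (r : ℝ) : ℝ :=
  ∫ t in (0 : ℝ)..r, t ^ (n - 1)

lemma convexOn_sinh_Ici : ConvexOn ℝ (Ici 0) sinh := by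
  refine MonotoneOn.convexOn_of_deriv (convex_Ici 0) continuous_sinh.continuousOn
    differentiable_sinh.differentiableOn ?_
  rw [interior_Ici, Real.deriv_sinh]
  intro x hx y hy hxy
  rw [cosh_le_cosh, abs_of_pos hx, abs_of_pos hy]
  exact hxy

lemma sinh_mul_le_mul_sinh {c s : ℝ} (hc₀ : 0 ≤ c) (hc₁ : c ≤ 1) (hs : 0 ≤ s) :
    sinh (c * s) ≤ c * sinh s := by
  simpa using convexOn_sinh_Ici.2 (mem_Ici.2 hs) (mem_Ici.2 le_rfl) hc₀ (sub_nonneg.2 hc₁)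
    (add_sub_cancel c 1)

lemma eucBallVol_eq_pow_div {n : ℕ} (hn : 1 ≤ n) (r : ℝ) : eucBallVol n r = r ^ n / n := by
  rw [eucBallVol, integral_pow, Nat.sub_add_cancel hn, Nat.cast_sub hn,
    zero_pow (by omega : n ≠ 0)]
  simp

lemma eucBallVol_pos {n : ℕ} (hn : 1 ≤ n) {r : ℝ} (hr : 0 < r) : 0 < eucBallVol n r := by
  rw [eucBallVol_eq_pow_div hn]
  positivity

lemma eucBallVol_le_hypBallVol (n : ℕ) {r : ℝ} (hr : 0 ≤ r) : eucBallVol n r ≤ hypBallVol n r :=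
  intervalIntegral.integral_mono_on hr ((continuous_pow _).intervalIntegrable _ _)
    ((continuous_sinh.pow _).intervalIntegrable _ _)
    fun _ ht ↦ pow_le_pow_left₀ ht.1 (self_le_sinh_iff.2 ht.1) _

lemma hypBallVol_le_div_pow_mul {n : ℕ} (hn : 1 ≤ n) {r ε : ℝ} (hr : 0 < r) (hrε : r ≤ ε) :
    hypBallVol n r ≤ (r / ε) ^ n * hypBallVol n ε := by
  have hε : 0 < ε := hr.trans_le hrε
  set c := r / ε with hc
  have hc₀ : 0 < c := div_pos hr hε
  have hc₁ : c ≤ 1 := (div_le_one hε).2 hrε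
  have hsubst : hypBallVol n r = c * ∫ s in (0 : ℝ)..ε, sinh (c * s) ^ (n - 1) := by
    rw [intervalIntegral.integral_comp_mul_left (fun t ↦ sinh t ^ (n - 1)) hc₀.ne', mul_zero,
      hc, div_mul_cancel₀ _ hε.ne', smul_eq_mul, mul_inv_cancel_left₀ hc₀.ne', hypBallVol]
  have hpointwise : ∫ s in (0 : ℝ)..ε, sinh (c * s) ^ (n - 1) ≤
      ∫ s in (0 : ℝ)..ε, c ^ (n - 1) * sinh s ^ (n - 1) := by
    refine intervalIntegral.integral_mono_on hε.le
      (((continuous_sinh.comp (continuous_const_mul c)).pow _).intervalIntegrable _ _)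
      ((continuous_const.mul (continuous_sinh.pow _)).intervalIntegrable _ _) fun t ht ↦ ?_
    rw [← mul_pow]
    exact pow_le_pow_left₀ (sinh_nonneg_iff.2 (mul_nonneg hc₀.le ht.1))
      (sinh_mul_le_mul_sinh hc₀.le hc₁ ht.1) _
  calc hypBallVol n r
      ≤ c * ∫ s in (0 : ℝ)..ε, c ^ (n - 1) * sinh s ^ (n - 1) := by
        rw [hsubst]; exact mul_le_mul_of_nonneg_left hpointwise hc₀.le
    _ = c ^ n * hypBallVol n ε := by
        rw [intervalIntegral.integral_const_mul, ← mul_assoc, ← pow_succ', Nat.sub_add_cancel hn,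
          hypBallVol]

lemma hypBallVol_div_eucBallVol_mono {n : ℕ} (hn : 1 ≤ n) {r ε : ℝ} (hr : 0 < r) (hrε : r ≤ ε) :
    hypBallVol n r / eucBallVol n r ≤ hypBallVol n ε / eucBallVol n ε := by
  have hε : 0 < ε := hr.trans_le hrε
  rw [div_le_div_iff₀ (eucBallVol_pos hn hr) (eucBallVol_pos hn hε), eucBallVol_eq_pow_div hn,
    eucBallVol_eq_pow_div hn, ← mul_div_assoc, ← mul_div_assoc]
  refine div_le_div_of_nonneg_right ?_ n.cast_nonneg
  calc hypBallVol n r * ε ^ n ≤ (r / ε) ^ n * hypBallVol n ε * ε ^ n := by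
        gcongr; exact hypBallVol_le_div_pow_mul hn hr hrε
    _ = hypBallVol n ε * r ^ n := by
        rw [div_pow]; field_simp

lemma measureReal_union_le_of_subset_inter {α : Type*} [MeasurableSpace α] {μ : Measure α}
    {s t u : Set α} (hu : u ⊆ s ∩ t) (ht : MeasurableSet t) (hs' : μ s ≠ ⊤) (ht' : μ t ≠ ⊤) :
    μ.real (s ∪ t) ≤ μ.real s + μ.real t - μ.real u := by
  have hinter : μ.real u ≤ μ.real (s ∩ t) :=
    measureReal_mono hu (measure_ne_top_of_subset inter_subset_left hs')
  linarith [measureReal_union_add_inter ht hs' ht']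

theorem stmt_11_general {X : Type*} [MetricSpace X] [MeasurableSpace X] [BorelSpace X]
    (μ : Measure X) (n : ℕ) (hn : 1 ≤ n) (rinj : ℝ)
    (hvol : ∀ (x : X) (r : ℝ), 0 < r → r ≤ rinj →
      (μ (Metric.ball x r)).toReal = hypBallVol n r ∧ μ (Metric.ball x r) ≠ ⊤)
    (ρ r' ε ϑ : ℝ) (hρ1 : ρ < 1) (hr'0 : 0 < r') (hr'inj : r' ≤ rinj)
    (x₁ x₂ : X)
    (hmid : ∃ x : X, dist x x₁ ≤ ρ * r' ∧ dist x x₂ ≤ ρ * r') :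
    (μ (Metric.ball x₁ r' ∪ Metric.ball x₂ r')).toReal ≤
      (2 * hypBallVol n r' / eucBallVol n r' - (1 - ρ) ^ n) * eucBallVol n r' ∧
    (0 < ε → r' ≤ ε →
      2 * ϑ * eucBallVol n r' ≤ (μ (Metric.ball x₁ r' ∪ Metric.ball x₂ r')).toReal →
      (1 - ρ) ^ n ≤ 2 * (hypBallVol n ε / eucBallVol n ε - ϑ)) := by
  obtain ⟨x, hx₁, hx₂⟩ := hmid
  have hs : 0 < (1 - ρ) * r' := mul_pos (sub_pos.2 hρ1) hr'0
  have hsr' : (1 - ρ) * r' ≤ r' := by nlinarith [dist_nonneg.trans hx₁]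
  have hlens : Metric.ball x ((1 - ρ) * r') ⊆ Metric.ball x₁ r' ∩ Metric.ball x₂ r' :=
    subset_inter (Metric.ball_subset_ball' (by linarith)) (Metric.ball_subset_ball' (by linarith))
  obtain ⟨hB₁, hB₁'⟩ := hvol x₁ r' hr'0 hr'inj
  obtain ⟨hB₂, hB₂'⟩ := hvol x₂ r' hr'0 hr'inj
  have hlens_vol : (1 - ρ) ^ n * eucBallVol n r' ≤ hypBallVol n ((1 - ρ) * r') :=
    calc (1 - ρ) ^ n * eucBallVol n r' = eucBallVol n ((1 - ρ) * r') := by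
          rw [eucBallVol_eq_pow_div hn, eucBallVol_eq_pow_div hn, mul_pow, mul_div_assoc]
      _ ≤ hypBallVol n ((1 - ρ) * r') := eucBallVol_le_hypBallVol n hs.le
  have hunion : (μ (Metric.ball x₁ r' ∪ Metric.ball x₂ r')).toReal ≤
      2 * hypBallVol n r' - (1 - ρ) ^ n * eucBallVol n r' := by
    have := measureReal_union_le_of_subset_inter hlens measurableSet_ball hB₁' hB₂'
    rw [measureReal_def, measureReal_def, measureReal_def, measureReal_def, hB₁, hB₂,
      (hvol x _ hs (hsr'.trans hr'inj)).1] at this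
    linarith
  have hE := eucBallVol_pos hn hr'0
  refine ⟨by rwa [sub_mul, div_mul_cancel₀ _ hE.ne'], fun _ hr'ε hϑ ↦ ?_⟩
  have hratio := hypBallVol_div_eucBallVol_mono hn hr'0 hr'ε
  have : (1 - ρ) ^ n ≤ 2 * (hypBallVol n r' / eucBallVol n r' - ϑ) := by
    rw [mul_sub, ← mul_div_assoc, le_sub_iff_add_le, le_div_iff₀ hE]
    linarith
  linarith

/-- Quantitative overlap estimate (core of Lemma 4.4): two balls of radius `r'` in
hyperbolic `n`-space (modelled by a metric measure space in which balls of radius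
`≤ rinj` have exactly hyperbolic volume, and midpoints exist) whose centers are at
distance `≤ 2ρr'` satisfy
`vol(B₁ ∪ B₂) ≤ (2 vol_ℍ(r')/vol_ℝ(r') − (1−ρ)ⁿ)·vol_ℝ(r')`; consequently if
`vol(B₁ ∪ B₂) ≥ 2ϑ vol_ℝ(r')` and `r' ≤ ε` then
`(1−ρ)ⁿ ≤ 2 (vol_ℍ(ε)/vol_ℝ(ε) − ϑ)`. -/
theorem stmt_11 {X : Type*} [MetricSpace X] [MeasurableSpace X] [BorelSpace X]
    (μ : Measure X) (n : ℕ) (hn : 1 ≤ n) (rinj : ℝ)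
    (hvol : ∀ (x : X) (r : ℝ), 0 < r → r ≤ rinj →
      (μ (Metric.ball x r)).toReal = hypBallVol n r ∧ μ (Metric.ball x r) ≠ ⊤)
    (ρ r' ε ϑ : ℝ) (hρ0 : 0 < ρ) (hρ1 : ρ < 1) (hr'0 : 0 < r') (hr'inj : r' ≤ rinj)
    (x₁ x₂ : X) (hd : dist x₁ x₂ ≤ 2 * ρ * r')
    (hmid : ∃ x : X, dist x x₁ ≤ ρ * r' ∧ dist x x₂ ≤ ρ * r') :
    (μ (Metric.ball x₁ r' ∪ Metric.ball x₂ r')).toReal ≤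
      (2 * hypBallVol n r' / eucBallVol n r' - (1 - ρ) ^ n) * eucBallVol n r' ∧
    (0 < ε → r' ≤ ε →
      2 * ϑ * eucBallVol n r' ≤ (μ (Metric.ball x₁ r' ∪ Metric.ball x₂ r')).toReal →
      (1 - ρ) ^ n ≤ 2 * (hypBallVol n ε / eucBallVol n ε - ϑ)) :=
  stmt_11_general μ n hn rinj hvol ρ r' ε ϑ hρ1 hr'0 hr'inj x₁ x₂ hmid
end
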